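/- Suppose A belongs to the class 𝒜, X is a Banach lattice which is an AL-space, and Φ satisfies condition (*). Then h_Φ^A(X) (with coordinatewise order) is strictly monotone: for all x̄, ȳ ∈ h_Φ^A(X) with 0 ≤ ȳ ≤ x̄ and ȳ ≠ x̄, one has ‖ȳ‖_Φ^A < ‖x̄‖_Φ^A. -/

import Mathlib

open Filter Topology

/-- An Orlicz function: convex, nondecreasing, continuous on `[0,∞)`,
vanishing at `0`, positive on `(0,∞)`, tending to `∞` at `∞`. -/
structure IsOrliczFn (φ : ℝ → ℝ) : Prop where
  convexOn : ConvexOn ℝ (Set.Ici (0 : ℝ)) φ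
  monotoneOn : MonotoneOn φ (Set.Ici (0 : ℝ))
  continuousOn : ContinuousOn φ (Set.Ici (0 : ℝ))
  map_zero : φ 0 = 0
  pos : ∀ t : ℝ, 0 < t → 0 < φ t
  tendsto_atTop : Filter.Tendsto φ Filter.atTop Filter.atTop

/-- A Musielak-Orlicz function: a sequence of Orlicz functions. -/
def IsMusielakOrlicz (Φ : ℕ → ℝ → ℝ) : Prop := ∀ n, IsOrliczFn (Φ n)

/-- Condition δ₂ for a Musielak-Orlicz function. -/
def MOCondDelta2 (Φ : ℕ → ℝ → ℝ) : Prop :=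
  ∃ K > (0 : ℝ), ∃ δ > (0 : ℝ), ∃ c : ℕ → ℝ, (∀ n, 0 ≤ c n) ∧ Summable c ∧
    ∀ n : ℕ, ∀ x : ℝ, 0 ≤ x → Φ n x ≤ δ → Φ n (2 * x) ≤ K * Φ n x + c n

/-- Condition (*) for a Musielak-Orlicz function. -/
def MOCondStar (Φ : ℕ → ℝ → ℝ) : Prop :=
  ∀ ε : ℝ, ε ∈ Set.Ioo (0 : ℝ) 1 → ∃ δ > (0 : ℝ), ∀ n : ℕ, ∀ u : ℝ, 0 ≤ u →
    Φ n u < 1 - ε → Φ n ((1 + δ) * u) ≤ 1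

/-- The class 𝒜 of infinite matrices: every column is nonzero. -/
def MatrixClassA (a : ℕ → ℕ → ℝ) : Prop := ∀ k, ∃ n, a n k ≠ 0

/-- A triangle matrix: nonzero diagonal, zero above the diagonal. -/
def IsTriangle (a : ℕ → ℕ → ℝ) : Prop := (∀ n, a n n ≠ 0) ∧ ∀ n k, n < k → a n k = 0

/-- The `n`-th row sum `∑_k |a_{nk}| ‖x_k‖`. -/
noncomputable def rowSum {X : Type*} [NormedAddCommGroup X]
    (a : ℕ → ℕ → ℝ) (x : ℕ → X) (n : ℕ) : ℝ :=
  ∑' k, |a n k| * ‖x k‖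

/-- Membership in the generalized Musielak-Orlicz sequence space `l_Φ^A(X)`:
`x` is a bounded sequence whose row sums are finite and
`∑_n φ_n(rowSum_n / σ) < ∞` for some `σ > 0`. -/
def MemL {X : Type*} [NormedAddCommGroup X]
    (Φ : ℕ → ℝ → ℝ) (a : ℕ → ℕ → ℝ) (x : ℕ → X) : Prop :=
  (∃ C : ℝ, ∀ k, ‖x k‖ ≤ C) ∧ (∀ n, Summable fun k => |a n k| * ‖x k‖) ∧
    ∃ σ > (0 : ℝ), Summable fun n => Φ n (rowSum a x n / σ)

/-- Membership in `h_Φ^A(X)`: as `MemL` but for every `σ > 0`. -/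
def MemH {X : Type*} [NormedAddCommGroup X]
    (Φ : ℕ → ℝ → ℝ) (a : ℕ → ℕ → ℝ) (x : ℕ → X) : Prop :=
  (∃ C : ℝ, ∀ k, ‖x k‖ ≤ C) ∧ (∀ n, Summable fun k => |a n k| * ‖x k‖) ∧
    ∀ σ > (0 : ℝ), Summable fun n => Φ n (rowSum a x n / σ)

/-- The Luxemburg-type norm `‖x‖_Φ^A`. -/
noncomputable def ANorm {X : Type*} [NormedAddCommGroup X]
    (Φ : ℕ → ℝ → ℝ) (a : ℕ → ℕ → ℝ) (x : ℕ → X) : ℝ :=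
  sInf {σ : ℝ | 0 < σ ∧ (Summable fun n => Φ n (rowSum a x n / σ)) ∧
    (∑' n, Φ n (rowSum a x n / σ)) ≤ 1}

/-- The modular `ρ_Φ^A(x) = ∑_n φ_n(∑_k |a_{nk}| ‖x_k‖)`. -/
noncomputable def rhoA {X : Type*} [NormedAddCommGroup X]
    (Φ : ℕ → ℝ → ℝ) (a : ℕ → ℕ → ℝ) (x : ℕ → X) : ℝ :=
  ∑' n, Φ n (rowSum a x n)

/-- The `m`-th section of a sequence: first `m` coordinates kept, rest zero. -/
def sect {X : Type*} [Zero X] (x : ℕ → X) (m : ℕ) : ℕ → X :=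
  fun k => if k < m then x k else 0

/-!
In an AL-space the norm is additive on the positive cone, so `0 ≤ y ≤ x`, `y ≠ x` gives
`‖y k‖ ≤ ‖x k‖` for all `k` with strict inequality at some `k₀`; a row `n₀` of `A` with
`a n₀ k₀ ≠ 0` then has a strictly smaller row sum for `y` than for `x`. What remains concerns
the Luxemburg norm of nonnegative real sequences `s ≤ r` with `s n₀ < r n₀`. At `σ = ‖r‖` the
modular of `r` is still at most one (it is right-continuous in `σ`), so the modular of `s` at `σ`
is strictly below one. Since `s` lies in `h_Φ`, its modular is also finite at `σ / 2`, and
convexity of the `φ_n` between the scales `σ` and `σ / 2` keeps it at most one at some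
`σ / (1 + δ) < σ`.
-/

theorem IsOrliczFn.mono {φ : ℝ → ℝ} (hφ : IsOrliczFn φ) {s t : ℝ} (hs : 0 ≤ s) (hst : s ≤ t) :
    φ s ≤ φ t :=
  hφ.monotoneOn hs (hs.trans hst) hst

theorem IsOrliczFn.nonneg {φ : ℝ → ℝ} (hφ : IsOrliczFn φ) {t : ℝ} (ht : 0 ≤ t) : 0 ≤ φ t :=
  hφ.map_zero ▸ hφ.mono le_rfl ht

theorem IsOrliczFn.strictMonoOn {φ : ℝ → ℝ} (hφ : IsOrliczFn φ) :
    StrictMonoOn φ (Set.Ici 0) := by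
  intro s (hs : 0 ≤ s) t (ht : 0 ≤ t) hst
  rcases hs.eq_or_lt with rfl | hs
  · rw [hφ.map_zero]
    exact hφ.pos t hst
  · have hφs : φ 0 < φ s := by rw [hφ.map_zero]; exact hφ.pos s hs
    refine hφ.convexOn.lt_right_of_left_lt Set.self_mem_Ici ht ?_ hφs
    rw [openSegment_eq_Ioo (hs.trans hst)]
    exact ⟨hs, hst⟩

theorem IsOrliczFn.map_mul_le {φ : ℝ → ℝ} (hφ : IsOrliczFn φ) {c t : ℝ} (hc₀ : 0 ≤ c)
    (hc₁ : c ≤ 1) (ht : 0 ≤ t) : φ (c * t) ≤ c * φ t := by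
  have := hφ.convexOn.2 Set.self_mem_Ici (Set.mem_Ici.2 ht) (sub_nonneg.2 hc₁) hc₀ (by ring)
  simpa [hφ.map_zero] using this

theorem IsOrliczFn.map_one_add_mul_le {φ : ℝ → ℝ} (hφ : IsOrliczFn φ) {δ t : ℝ} (hδ₀ : 0 ≤ δ)
    (hδ₁ : δ ≤ 1) (ht : 0 ≤ t) : φ ((1 + δ) * t) ≤ (1 - δ) * φ t + δ * φ (2 * t) := by
  have hcomb : (1 + δ) * t = (1 - δ) • t + δ • (2 * t) := by
    simp only [smul_eq_mul]
    ring
  rw [hcomb]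
  exact hφ.convexOn.2 (Set.mem_Ici.2 ht) (Set.mem_Ici.2 (by positivity)) (sub_nonneg.2 hδ₁) hδ₀
    (by ring)

def luxemburgScales (Φ : ℕ → ℝ → ℝ) (r : ℕ → ℝ) : Set ℝ :=
  {σ | 0 < σ ∧ (Summable fun n => Φ n (r n / σ)) ∧ (∑' n, Φ n (r n / σ)) ≤ 1}

noncomputable def luxemburgNorm (Φ : ℕ → ℝ → ℝ) (r : ℕ → ℝ) : ℝ :=
  sInf (luxemburgScales Φ r)

section Luxemburg

variable {Φ : ℕ → ℝ → ℝ} {r s : ℕ → ℝ}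

theorem luxemburgNorm_le {σ : ℝ} (hσ : σ ∈ luxemburgScales Φ r) : luxemburgNorm Φ r ≤ σ :=
  csInf_le ⟨0, fun _ h => h.1.le⟩ hσ

theorem luxemburgScales_nonempty (hΦ : IsMusielakOrlicz Φ) (hr : ∀ n, 0 ≤ r n)
    (hsum : Summable fun n => Φ n (r n)) : (luxemburgScales Φ r).Nonempty := by
  set σ := max 1 (∑' n, Φ n (r n))
  have hσ : 0 < σ := lt_max_of_lt_left one_pos
  have hle (n : ℕ) : Φ n (r n / σ) ≤ σ⁻¹ * Φ n (r n) := by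
    rw [div_eq_inv_mul]
    exact (hΦ n).map_mul_le (by positivity) (inv_le_one_of_one_le₀ (le_max_left _ _)) (hr n)
  have hsumσ : Summable fun n => Φ n (r n / σ) :=
    (hsum.mul_left σ⁻¹).of_nonneg_of_le (fun n => (hΦ n).nonneg (div_nonneg (hr n) hσ.le)) hle
  refine ⟨σ, hσ, hsumσ, ?_⟩
  calc ∑' n, Φ n (r n / σ) ≤ ∑' n, σ⁻¹ * Φ n (r n) := hsumσ.tsum_le_tsum hle (hsum.mul_left _)
    _ = σ⁻¹ * ∑' n, Φ n (r n) := tsum_mul_left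
    _ ≤ 1 := by
      rw [inv_mul_le_iff₀ hσ, mul_one]
      exact le_max_right _ _

theorem mem_luxemburgScales_of_lt (hΦ : IsMusielakOrlicz Φ) (hr : ∀ n, 0 ≤ r n)
    (hrh : ∀ σ > 0, Summable fun n => Φ n (r n / σ)) {σ : ℝ} (hσ : luxemburgNorm Φ r < σ) :
    σ ∈ luxemburgScales Φ r := by
  have hne := luxemburgScales_nonempty hΦ hr (by simpa using hrh 1 one_pos)
  obtain ⟨τ, ⟨hτ, hτsum, hτ1⟩, hτσ⟩ := exists_lt_of_csInf_lt hne hσ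
  have hσ₀ : 0 < σ := hτ.trans hτσ
  refine ⟨hσ₀, hrh σ hσ₀, le_trans ((hrh σ hσ₀).tsum_le_tsum (fun n => ?_) hτsum) hτ1⟩
  exact (hΦ n).mono (div_nonneg (hr n) hσ₀.le) (div_le_div_of_nonneg_left (hr n) hτ hτσ.le)

theorem luxemburgNorm_pos (hΦ : IsMusielakOrlicz Φ) (hr : ∀ n, 0 ≤ r n)
    (hsum : Summable fun n => Φ n (r n)) {n₀ : ℕ} (hn₀ : 0 < r n₀) : 0 < luxemburgNorm Φ r := by
  obtain ⟨t, hΦt, ht⟩ :=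
    (((hΦ n₀).tendsto_atTop.eventually_gt_atTop 1).and (eventually_gt_atTop 0)).exists
  refine (div_pos hn₀ ht).trans_le (le_csInf (luxemburgScales_nonempty hΦ hr hsum) ?_)
  rintro σ ⟨hσ, hσsum, hσ1⟩
  have hterm : Φ n₀ (r n₀ / σ) ≤ 1 :=
    (hσsum.le_tsum n₀ fun n _ => (hΦ n).nonneg (div_nonneg (hr n) hσ.le)).trans hσ1
  have hlt : r n₀ / σ < t := by
    by_contra! h
    linarith [(hΦ n₀).mono ht.le h]
  rw [div_lt_iff₀ hσ] at hlt
  rw [div_le_iff₀ ht, mul_comm]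
  exact hlt.le

theorem tsum_le_one_at_luxemburgNorm (hΦ : IsMusielakOrlicz Φ) (hr : ∀ n, 0 ≤ r n)
    (hrh : ∀ σ > 0, Summable fun n => Φ n (r n / σ)) (hpos : 0 < luxemburgNorm Φ r) :
    ∑' n, Φ n (r n / luxemburgNorm Φ r) ≤ 1 := by
  set σ := luxemburgNorm Φ r
  have hterm (n : ℕ) : Tendsto (fun τ => Φ n (r n / τ)) (𝓝[>] σ) (𝓝 (Φ n (r n / σ))) := by
    have hdiv : Tendsto (fun τ => r n / τ) (𝓝[>] σ) (𝓝[Set.Ici 0] (r n / σ)) :=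
      tendsto_nhdsWithin_iff.2
        ⟨(continuousAt_const.div continuousAt_id hpos.ne').tendsto.mono_left nhdsWithin_le_nhds,
          eventually_nhdsWithin_of_forall fun τ hτ => div_nonneg (hr n) (hpos.trans hτ).le⟩
    exact ((hΦ n).continuousOn _ (div_nonneg (hr n) hpos.le)).tendsto.comp hdiv
  refine Real.tsum_le_of_sum_range_le (fun n => (hΦ n).nonneg (div_nonneg (hr n) hpos.le))
    fun N => le_of_tendsto (tendsto_finsetSum _ fun n _ => hterm n) ?_
  filter_upwards [self_mem_nhdsWithin] with τ hτ
  obtain ⟨hτ₀, hτsum, hτ1⟩ := mem_luxemburgScales_of_lt hΦ hr hrh hτ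
  exact (hτsum.sum_le_tsum _ fun n _ => (hΦ n).nonneg (div_nonneg (hr n) hτ₀.le)).trans hτ1

theorem luxemburgNorm_lt_of_tsum_lt_one (hΦ : IsMusielakOrlicz Φ) (hr : ∀ n, 0 ≤ r n)
    (hrh : ∀ σ > 0, Summable fun n => Φ n (r n / σ)) {σ : ℝ} (hσ : 0 < σ)
    (h : ∑' n, Φ n (r n / σ) < 1) : luxemburgNorm Φ r < σ := by
  set M := ∑' n, Φ n (r n / σ)
  set M₂ := ∑' n, Φ n (r n / (σ / 2))
  obtain ⟨δ, ⟨hδ₀, hδ₁⟩, hδ⟩ : ∃ δ ∈ Set.Ioc (0 : ℝ) 1, (1 - δ) * M + δ * M₂ < 1 := by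
    have hcont : Continuous fun δ : ℝ => (1 - δ) * M + δ * M₂ := by fun_prop
    have hlim : Tendsto (fun δ : ℝ => (1 - δ) * M + δ * M₂) (𝓝[>] 0) (𝓝 M) := by
      simpa using (hcont.tendsto 0).mono_left nhdsWithin_le_nhds
    exact ((eventually_mem_set.2 (Ioc_mem_nhdsGT one_pos)).and (hlim.eventually_lt_const h)).exists
  have hσδ : 0 < σ / (1 + δ) := by positivity
  have hpt (n : ℕ) : Φ n (r n / (σ / (1 + δ))) ≤
      (1 - δ) * Φ n (r n / σ) + δ * Φ n (r n / (σ / 2)) := by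
    have e₁ : r n / (σ / (1 + δ)) = (1 + δ) * (r n / σ) := by field_simp
    have e₂ : r n / (σ / 2) = 2 * (r n / σ) := by field_simp
    rw [e₁, e₂]
    exact (hΦ n).map_one_add_mul_le hδ₀.le hδ₁ (div_nonneg (hr n) hσ.le)
  have hsum₁ := (hrh σ hσ).mul_left (1 - δ)
  have hsum₂ := (hrh (σ / 2) (by positivity)).mul_left δ
  refine (luxemburgNorm_le ⟨hσδ, hrh _ hσδ, ?_⟩).trans_lt (div_lt_self hσ (by linarith))
  calc ∑' n, Φ n (r n / (σ / (1 + δ)))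
      ≤ ∑' n, ((1 - δ) * Φ n (r n / σ) + δ * Φ n (r n / (σ / 2))) :=
        (hrh _ hσδ).tsum_le_tsum hpt (hsum₁.add hsum₂)
    _ = (1 - δ) * M + δ * M₂ := by rw [hsum₁.tsum_add hsum₂, tsum_mul_left, tsum_mul_left]
    _ ≤ 1 := hδ.le

theorem luxemburgNorm_lt_luxemburgNorm (hΦ : IsMusielakOrlicz Φ) (hs : ∀ n, 0 ≤ s n)
    (hsr : ∀ n, s n ≤ r n) {n₀ : ℕ} (hn₀ : s n₀ < r n₀)
    (hrh : ∀ σ > 0, Summable fun n => Φ n (r n / σ))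
    (hsh : ∀ σ > 0, Summable fun n => Φ n (s n / σ)) :
    luxemburgNorm Φ s < luxemburgNorm Φ r := by
  have hr (n : ℕ) : 0 ≤ r n := (hs n).trans (hsr n)
  have hpos := luxemburgNorm_pos hΦ hr (by simpa using hrh 1 one_pos) ((hs n₀).trans_lt hn₀)
  set σ := luxemburgNorm Φ r
  refine luxemburgNorm_lt_of_tsum_lt_one hΦ hs hsh hpos
    ((hsh σ hpos).tsum_lt_tsum (i := n₀) (fun n => ?_) ?_ (hrh σ hpos) |>.trans_le
      (tsum_le_one_at_luxemburgNorm hΦ hr hrh hpos))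
  · exact (hΦ n).mono (div_nonneg (hs n) hpos.le) (div_le_div_of_nonneg_right (hsr n) hpos.le)
  · exact (hΦ n₀).strictMonoOn (div_nonneg (hs n₀) hpos.le) (div_nonneg (hr n₀) hpos.le)
      (div_lt_div_of_pos_right hn₀ hpos)

end Luxemburg

theorem ANorm_eq_luxemburgNorm {X : Type*} [NormedAddCommGroup X] (Φ : ℕ → ℝ → ℝ)
    (a : ℕ → ℕ → ℝ) (x : ℕ → X) : ANorm Φ a x = luxemburgNorm Φ (rowSum a x) :=
  rfl

section RowSum

variable {X Y : Type*} [NormedAddCommGroup X] [NormedAddCommGroup Y] {a : ℕ → ℕ → ℝ}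
  {x : ℕ → X} {y : ℕ → Y} {n : ℕ}

theorem rowSum_nonneg : 0 ≤ rowSum a x n :=
  tsum_nonneg fun _ => by positivity

theorem rowSum_le_rowSum (hyx : ∀ k, ‖y k‖ ≤ ‖x k‖)
    (hx : Summable fun k => |a n k| * ‖x k‖) : rowSum a y n ≤ rowSum a x n := by
  have hle (k : ℕ) : |a n k| * ‖y k‖ ≤ |a n k| * ‖x k‖ :=
    mul_le_mul_of_nonneg_left (hyx k) (abs_nonneg _)
  exact (hx.of_nonneg_of_le (fun _ => by positivity) hle).tsum_le_tsum hle hx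

theorem rowSum_lt_rowSum (hyx : ∀ k, ‖y k‖ ≤ ‖x k‖) {k₀ : ℕ} (hk₀ : ‖y k₀‖ < ‖x k₀‖)
    (ha : a n k₀ ≠ 0) (hx : Summable fun k => |a n k| * ‖x k‖) : rowSum a y n < rowSum a x n :=
  Summable.tsum_lt_tsum_of_nonneg (fun _ => by positivity)
    (fun k => mul_le_mul_of_nonneg_left (hyx k) (abs_nonneg _))
    (mul_lt_mul_of_pos_left hk₀ (abs_pos.2 ha)) hx

end RowSum

theorem norm_eq_norm_add_norm_sub {X : Type*} [NormedAddCommGroup X] [PartialOrder X]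
    [IsOrderedAddMonoid X] (hAL : ∀ u v : X, 0 ≤ u → 0 ≤ v → ‖u + v‖ = ‖u‖ + ‖v‖) {x y : X}
    (hy : 0 ≤ y) (hyx : y ≤ x) : ‖x‖ = ‖y‖ + ‖x - y‖ := by
  simpa using hAL y (x - y) hy (sub_nonneg.2 hyx)

theorem hPhiA_strictly_monotone_general
    {X : Type*} [NormedAddCommGroup X] [Lattice X] [IsOrderedAddMonoid X]
    (hAL : ∀ u v : X, 0 ≤ u → 0 ≤ v → ‖u + v‖ = ‖u‖ + ‖v‖)
    (Φ : ℕ → ℝ → ℝ) (hΦ : IsMusielakOrlicz Φ)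
    (a : ℕ → ℕ → ℝ) (hA : MatrixClassA a) :
    ∀ x y : ℕ → X, MemH Φ a x → MemH Φ a y →
      (∀ k, 0 ≤ y k) → (∀ k, y k ≤ x k) → y ≠ x →
      ANorm Φ a y < ANorm Φ a x := by
  rintro x y ⟨-, hxS, hxh⟩ ⟨-, -, hyh⟩ hy0 hyx hne
  obtain ⟨k₀, hk₀⟩ := Function.ne_iff.1 hne
  obtain ⟨n₀, hn₀⟩ := hA k₀
  have hsplit (k : ℕ) : ‖x k‖ = ‖y k‖ + ‖x k - y k‖ :=
    norm_eq_norm_add_norm_sub hAL (hy0 k) (hyx k)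
  have hle (k : ℕ) : ‖y k‖ ≤ ‖x k‖ := by
    rw [hsplit k]
    exact le_add_of_nonneg_right (norm_nonneg _)
  have hlt : ‖y k₀‖ < ‖x k₀‖ := by
    rw [hsplit k₀]
    exact lt_add_of_pos_right _ (norm_pos_iff.2 (sub_ne_zero.2 (Ne.symm hk₀)))
  rw [ANorm_eq_luxemburgNorm, ANorm_eq_luxemburgNorm]
  exact luxemburgNorm_lt_luxemburgNorm hΦ (fun _ => rowSum_nonneg)
    (fun n => rowSum_le_rowSum hle (hxS n)) (rowSum_lt_rowSum hle hlt hn₀ (hxS n₀)) hxh hyh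

/-- if `A ∈ 𝒜`, `X` is an AL-space and `Φ` satisfies
condition (*), then `h_Φ^A(X)` is strictly monotone. -/
theorem hPhiA_strictly_monotone
    {X : Type*} [NormedAddCommGroup X] [Lattice X] [IsOrderedAddMonoid X] [HasSolidNorm X]
    [NormedSpace ℝ X] [CompleteSpace X]
    (hAL : ∀ u v : X, 0 ≤ u → 0 ≤ v → ‖u + v‖ = ‖u‖ + ‖v‖)
    (Φ : ℕ → ℝ → ℝ) (hΦ : IsMusielakOrlicz Φ) (hstar : MOCondStar Φ)
    (a : ℕ → ℕ → ℝ) (hA : MatrixClassA a) :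
    ∀ x y : ℕ → X, MemH Φ a x → MemH Φ a y →
      (∀ k, 0 ≤ y k) → (∀ k, y k ≤ x k) → y ≠ x →
      ANorm Φ a y < ANorm Φ a x :=
  hPhiA_strictly_monotone_general hAL Φ hΦ a hA
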